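/- Let L be a linearly compact Lie superalgebra with a filtration L = S_{−d} ⊃ ⋯ ⊃ S₀ ⊃ S₁ ⊃ ⋯ by open subalgebras such that the associated graded Gr L = ⊕_{j≥−d} 𝔤_j is transitive. If σ is a continuous automorphism of L preserving the filtration and inducing the identity on Gr L, then log σ = Σ_{n≥1} (−1)^{n+1} σ₁ⁿ/n converges (where σ = 1 + σ₁ with σ₁(S_j) ⊆ S_{j+1}), and t ↦ exp(t·log σ) is a one-parameter group of automorphisms; in particular σ lies in the image of the exponential of the first filtration member of the derivation algebra. -/

import Mathlib

/-- A Lie superalgebra structure on an `F`-module `L` (decomposition into even and odd part,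
bilinear bracket respecting parity, super-skew-symmetry and super-Jacobi identities). -/
structure LieSuperalgebraOn (F : Type*) (L : Type*) [CommRing F] [AddCommGroup L]
    [Module F L] where
  even : Submodule F L
  odd : Submodule F L
  compl : IsCompl even odd
  bracket : L →ₗ[F] L →ₗ[F] L
  bracket_ee : ∀ x ∈ even, ∀ y ∈ even, bracket x y ∈ even
  bracket_eo : ∀ x ∈ even, ∀ y ∈ odd, bracket x y ∈ odd
  bracket_oe : ∀ x ∈ odd, ∀ y ∈ even, bracket x y ∈ odd
  bracket_oo : ∀ x ∈ odd, ∀ y ∈ odd, bracket x y ∈ even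
  skew_even : ∀ x ∈ even, ∀ y : L, bracket x y = - bracket y x
  symm_odd : ∀ x ∈ odd, ∀ y ∈ odd, bracket x y = bracket y x
  jacobi_even : ∀ x ∈ even, ∀ y z : L,
    bracket x (bracket y z) = bracket (bracket x y) z + bracket y (bracket x z)
  jacobi_odd_even : ∀ x ∈ odd, ∀ y ∈ even, ∀ z : L,
    bracket x (bracket y z) = bracket (bracket x y) z + bracket y (bracket x z)
  jacobi_odd_odd : ∀ x ∈ odd, ∀ y ∈ odd, ∀ z : L,
    bracket x (bracket y z) = bracket (bracket x y) z - bracket y (bracket x z)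

/-!
Write `σ = 1 + η`. Since `η` raises the filtration degree and `L` is complete and separated,
every formal power series `f` can be evaluated at `η` (its partial sums converge), and this gives
an algebra map `F⟦X⟧ → End L` compatible with substitution. So `D = log (1 + η)` raises the
degree as well, `exp (t • D)` is evaluated the same way, and `exp D = σ` because
`exp (log (1 + X)) = 1 + X` as formal power series.

Modulo `P (K - d)`, the defect `exp (t • D) [x, y] - [exp (t • D) x, exp (t • D) y]` is a
polynomial in `t` of degree `< K` whose coefficients are the Leibniz defects
`D^m [x, y] / m! - ∑_{p + q = m} [D^p x, D^q y] / (p! q!)`. It vanishes at `t = 0, …, K - 1`,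
where `exp (k • D) = σ ^ k`, so by Vandermonde all these coefficients lie in `P (K - d)`; as `K`
is arbitrary they vanish. The coefficient of `t` says that `D` is a derivation, and the vanishing
of all of them that every `exp (t • D)` is an automorphism. Parity is preserved because `D`
commutes with the projection onto the even part, as `σ` does.
-/

open PowerSeries Finset
open scoped Polynomial
open Polynomial (aeval)

lemma Commute.aeval_right {R A : Type*} [CommSemiring R] [Semiring A] [Algebra R A]
    {a b : A} (h : Commute a b) (p : R[X]) : Commute a (aeval b p) := by
  rw [Polynomial.aeval_eq_sum_range]
  exact Commute.sum_right _ _ _ fun i _ => (h.pow_right i).smul_right _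

lemma aeval_trunc_apply {R M : Type*} [CommRing R] [AddCommGroup M] [Module R M]
    (η : Module.End R M) (f : R⟦X⟧) (n : ℕ) (x : M) :
    aeval η (trunc n f) x = ∑ i ∈ range n, coeff i f • (η ^ i) x := by
  rw [Polynomial.aeval_def, eval₂_trunc_eq_sum_range, LinearMap.sum_apply]
  simp [Module.algebraMap_end_apply]

lemma Module.End.pow_apply_bilinear {R M : Type*} [CommRing R] [AddCommGroup M] [Module R M]
    {T : Module.End R M} {B : M →ₗ[R] M →ₗ[R] M} (hT : ∀ x y, T (B x y) = B (T x) (T y))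
    (k : ℕ) (x y : M) : (T ^ k) (B x y) = B ((T ^ k) x) ((T ^ k) y) := by
  induction k generalizing x y with
  | zero => simp
  | succ k ih => simp only [pow_succ, Module.End.mul_apply, hT, ih]

lemma Submodule.commute_projection_of_map_eq {R M : Type*} [CommRing R] [AddCommGroup M]
    [Module R M] {U V : Submodule R M} (hUV : IsCompl U V) (σ : M ≃ₗ[R] M)
    (hU : U.map (σ : M →ₗ[R] M) = U) (hV : V.map (σ : M →ₗ[R] M) = V) :
    Commute (U.projection V hUV) (σ : Module.End R M) :=
  (LinearMap.IsIdempotentElem.commute_iff_of_isUnit ((Module.End.isUnit_iff _).mpr σ.bijective)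
    (Submodule.isIdempotentElem_projection hUV)).mpr
    ⟨by rwa [Submodule.range_projection], by rwa [Submodule.ker_projection]⟩

lemma Finset.sum_range_sum_range_sub_sum_antidiagonal_mem {M S : Type*} [AddCommGroup M]
    [SetLike S M] [AddSubgroupClass S M] {W : S} (K : ℕ) (w : ℕ → ℕ → M)
    (hw : ∀ p q, K ≤ p + q → w p q ∈ W) :
    ∑ p ∈ range K, ∑ q ∈ range K, w p q
      - ∑ m ∈ range K, ∑ pq ∈ antidiagonal m, w pq.1 pq.2 ∈ W := by
  have hlow : ∑ m ∈ range K, ∑ pq ∈ antidiagonal m, w pq.1 pq.2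
      = ∑ pq ∈ (range K ×ˢ range K).filter (fun pq => pq.1 + pq.2 < K), w pq.1 pq.2 := by
    rw [Finset.sum_sigma']
    refine Finset.sum_bij' (fun x _ => x.2) (fun pq _ => ⟨pq.1 + pq.2, pq⟩) ?_ ?_ ?_ ?_ ?_ <;>
      simp +contextual
    all_goals omega
  rw [hlow, ← Finset.sum_product', ← Finset.sum_filter_add_sum_filter_not _
    (fun pq => pq.1 + pq.2 < K), add_sub_cancel_left]
  exact sum_mem fun pq hpq => hw _ _ (by simp at hpq; omega)

lemma Submodule.mem_of_forall_sum_range_natCast_pow_smul_mem {F M : Type*} [Field F] [CharZero F]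
    [AddCommGroup M] [Module F M] {W : Submodule F M} {K : ℕ} {v : ℕ → M}
    (h : ∀ k < K, ∑ i ∈ range K, (k : F) ^ i • v i ∈ W) : ∀ i < K, v i ∈ W := by
  classical
  intro i hi
  rw [← Submodule.Quotient.mk_eq_zero, ← Module.forall_dual_apply_eq_zero_iff F]
  -- `φ` turns the hypothesis into a polynomial of degree `< K` with the `K` roots `0, …, K - 1`.
  intro φ
  set ψ := φ ∘ₗ W.mkQ
  set p : F[X] := ∑ j : Fin K, Polynomial.C (ψ (v j)) * Polynomial.X ^ (j : ℕ)
  have hroots : ∀ k ∈ (range K).image (Nat.cast : ℕ → F), p.eval k = 0 := by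
    simp only [mem_image, mem_range, forall_exists_index, and_imp, forall_apply_eq_imp_iff₂]
    intro k hk
    have hψ : ψ (∑ i ∈ range K, (k : F) ^ i • v i) = 0 := by
      rw [LinearMap.comp_apply, Submodule.mkQ_apply,
        (Submodule.Quotient.mk_eq_zero W).mpr (h k hk), map_zero]
    simp only [map_sum, map_smul, smul_eq_mul] at hψ
    simp only [p, Polynomial.eval_finsetSum, Polynomial.eval_mul, Polynomial.eval_C,
      Polynomial.eval_pow, Polynomial.eval_X]
    rw [Fin.sum_univ_eq_sum_range (fun j => ψ (v j) * (k : F) ^ j)]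
    simpa [mul_comm] using hψ
  have hp : p = 0 := Polynomial.eq_zero_of_degree_lt_of_eval_finset_eq_zero _
    (by rw [card_image_of_injective _ Nat.cast_injective, card_range]; exact
      Polynomial.degree_sum_fin_lt _) hroots
  have hcoeff := congrArg (Polynomial.coeff · i) hp
  simp only [p, Polynomial.finsetSum_coeff, Polynomial.coeff_C_mul_X_pow,
    Polynomial.coeff_zero] at hcoeff
  rwa [Fin.sum_univ_eq_sum_range (fun j => if i = j then ψ (v j) else 0),
    sum_ite_eq, if_pos (mem_range.2 hi)] at hcoeff

lemma PowerSeries.one_add_X_mul_derivative_log {A : Type*} [CommRing A] [Algebra ℚ A] :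
    (1 + X) * d⁄dX A (log A) = 1 := by
  ext (_ | n)
  · simp [deriv_log]
  · simp [add_mul, deriv_log, coeff_succ_X_mul, pow_succ, coeff_one]

lemma PowerSeries.exp_subst_log {A : Type*} [CommRing A] [Algebra ℚ A] [IsAddTorsionFree A] :
    (exp A).subst (log A) = 1 + X := by
  -- `g = log' = (1 + X)⁻¹` satisfies `g' = -g ^ 2`, and `h' = h * g`, so `(h * g)' = 0`.
  set h : A⟦X⟧ := (exp A).subst (log A)
  set g := d⁄dX A (log A)
  have hg : (1 + X) * g = 1 := one_add_X_mul_derivative_log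
  have hdg : g + (1 + X) * d⁄dX A g = 0 := by
    simpa [Derivation.leibniz, smul_eq_mul, add_comm, mul_comm] using congrArg (d⁄dX A) hg
  have hdh : d⁄dX A h = h * g := by
    rw [derivative_subst HasSubst.log, derivative_exp]
  have hhg : h * g = 1 := by
    refine derivative.ext ?_ ?_
    · rw [Derivation.leibniz, hdh, derivative_one, smul_eq_mul, smul_eq_mul]
      linear_combination h * g * hdg - h * d⁄dX A g * hg
    · rw [map_mul, ← coeff_zero_eq_constantCoeff_apply, coeff_subst' HasSubst.log,
        finsum_eq_single _ 0 fun d hd => by simp [zero_pow hd]]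
      simp [g, deriv_log]
  linear_combination (1 + X) * hhg - h * hg

lemma PowerSeries.sum_range_succ_coeff_log_smul {F M : Type*} [Field F] [CharZero F]
    [AddCommGroup M] [Module F M] (v : ℕ → M) (N : ℕ) :
    ∑ m ∈ range (N + 1), coeff m (log F) • v m
      = ∑ m ∈ Icc 1 N, ((-1 : F) ^ (m + 1) * (m : F)⁻¹) • v m := by
  rw [range_eq_Ico, sum_eq_sum_Ico_succ_bot (Nat.succ_pos N), coeff_zero_eq_constantCoeff_apply,
    constantCoeff_log, zero_smul, zero_add]
  refine sum_congr (by ext; simp) fun m hm => ?_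
  simp [Nat.one_le_iff_ne_zero.mp (mem_Icc.mp hm).1, div_eq_mul_inv]

structure CompleteFiltration (R M : Type*) [CommRing R] [AddCommGroup M] [Module R M] where
  toFun : ℕ → Submodule R M
  zero_eq_top : toFun 0 = ⊤
  antitone : Antitone toFun
  iInf_eq_bot : ⨅ j, toFun j = ⊥
  complete : ∀ s : ℕ → M, (∀ n, s (n + 1) - s n ∈ toFun n) → ∃ x, ∀ n, x - s n ∈ toFun n

namespace CompleteFiltration

variable {R M : Type*} [CommRing R] [AddCommGroup M] [Module R M] (Φ : CompleteFiltration R M)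

instance : CoeFun (CompleteFiltration R M) (fun _ => ℕ → Submodule R M) := ⟨toFun⟩

lemma mem_zero (x : M) : x ∈ Φ 0 := by
  rw [show Φ 0 = ⊤ from Φ.zero_eq_top]; trivial

lemma mem_of_le {i j : ℕ} (h : i ≤ j) {x : M} (hx : x ∈ Φ j) : x ∈ Φ i :=
  Φ.antitone h hx

lemma eq_of_forall_sub_mem {x y : M} (h : ∀ n, x - y ∈ Φ n) : x = y := by
  have : x - y ∈ ⨅ j, Φ j := Submodule.mem_iInf _ |>.mpr h
  rwa [show ⨅ j, Φ j = ⊥ from Φ.iInf_eq_bot, Submodule.mem_bot, sub_eq_zero] at this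

def RaisesDegree (η : Module.End R M) : Prop :=
  ∀ j, ∀ x ∈ Φ j, η x ∈ Φ (j + 1)

variable {Φ} {η : Module.End R M}

lemma RaisesDegree.pow_apply_mem (hη : Φ.RaisesDegree η) {j : ℕ} {x : M} (hx : x ∈ Φ j)
    (i : ℕ) : (η ^ i) x ∈ Φ (j + i) := by
  induction i with
  | zero => simpa using hx
  | succ i ih => rw [pow_succ', Module.End.mul_apply, ← add_assoc]; exact hη _ _ ih

lemma RaisesDegree.aeval_apply_mem (hη : Φ.RaisesDegree η) {p : R[X]} {n : ℕ}
    (hp : ∀ k < n, p.coeff k = 0) {j : ℕ} {x : M} (hx : x ∈ Φ j) :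
    aeval η p x ∈ Φ (j + n) := by
  rw [Polynomial.aeval_eq_sum_range, LinearMap.sum_apply]
  refine Submodule.sum_mem _ fun k _ => ?_
  rcases lt_or_ge k n with hk | hk
  · simp [hp k hk]
  · exact Submodule.smul_mem _ _ (Φ.mem_of_le (by omega) (hη.pow_apply_mem hx k))

lemma RaisesDegree.aeval_sub_aeval_apply_mem (hη : Φ.RaisesDegree η) {p q : R[X]} {n : ℕ}
    (hpq : ∀ k < n, p.coeff k = q.coeff k) {j : ℕ} {x : M} (hx : x ∈ Φ j) :
    aeval η p x - aeval η q x ∈ Φ (j + n) := by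
  rw [← LinearMap.sub_apply, ← map_sub]
  exact hη.aeval_apply_mem (fun k hk => by rw [Polynomial.coeff_sub, hpq k hk, sub_self]) hx

lemma RaisesDegree.aeval_trunc_sub_mem (hη : Φ.RaisesDegree η) (f : R⟦X⟧) (n : ℕ) (x : M) :
    aeval η (trunc (n + 1) f) x - aeval η (trunc n f) x ∈ Φ n := by
  simpa using hη.aeval_sub_aeval_apply_mem (n := n)
    (fun k hk => by simp [coeff_trunc, hk, hk.trans (Nat.lt_succ_self n)]) (Φ.mem_zero x)

noncomputable def evalApply (hη : Φ.RaisesDegree η) (f : R⟦X⟧) (x : M) : M :=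
  (Φ.complete (fun n => aeval η (trunc n f) x) (hη.aeval_trunc_sub_mem f · x)).choose

lemma RaisesDegree.evalApply_sub_mem (hη : Φ.RaisesDegree η) (f : R⟦X⟧) (x : M) (n : ℕ) :
    evalApply hη f x - aeval η (trunc n f) x ∈ Φ n :=
  (Φ.complete (fun n => aeval η (trunc n f) x) (hη.aeval_trunc_sub_mem f · x)).choose_spec n

lemma RaisesDegree.eq_evalApply (hη : Φ.RaisesDegree η) {f : R⟦X⟧} {x y : M}
    (h : ∀ n, y - aeval η (trunc n f) x ∈ Φ n) : y = evalApply hη f x :=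
  Φ.eq_of_forall_sub_mem fun n => by
    simpa using Submodule.sub_mem _ (h n) (hη.evalApply_sub_mem f x n)

lemma RaisesDegree.evalApply_add (hη : Φ.RaisesDegree η) (f : R⟦X⟧) (x y : M) :
    evalApply hη f (x + y) = evalApply hη f x + evalApply hη f y :=
  (hη.eq_evalApply fun n => by
    simpa [add_sub_add_comm] using
      Submodule.add_mem _ (hη.evalApply_sub_mem f x n) (hη.evalApply_sub_mem f y n)).symm

lemma RaisesDegree.evalApply_smul (hη : Φ.RaisesDegree η) (f : R⟦X⟧) (c : R) (x : M) :
    evalApply hη f (c • x) = c • evalApply hη f x :=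
  (hη.eq_evalApply fun n => by
    simpa [smul_sub] using Submodule.smul_mem _ c (hη.evalApply_sub_mem f x n)).symm

lemma RaisesDegree.evalApply_add_left (hη : Φ.RaisesDegree η) (f g : R⟦X⟧) (x : M) :
    evalApply hη (f + g) x = evalApply hη f x + evalApply hη g x :=
  (hη.eq_evalApply fun n => by
    simpa [add_sub_add_comm] using
      Submodule.add_mem _ (hη.evalApply_sub_mem f x n) (hη.evalApply_sub_mem g x n)).symm

lemma RaisesDegree.evalApply_mul (hη : Φ.RaisesDegree η) (f g : R⟦X⟧) (x : M) :
    evalApply hη (f * g) x = evalApply hη f (evalApply hη g x) := by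
  refine (hη.eq_evalApply fun n => ?_).symm
  set y := evalApply hη g x
  have hf : evalApply hη f y - aeval η (trunc n f) y ∈ Φ n := hη.evalApply_sub_mem f y n
  have hg : aeval η (trunc n f) y - aeval η (trunc n f) (aeval η (trunc n g) x) ∈ Φ n := by
    rw [← map_sub]
    simpa using hη.aeval_apply_mem (n := 0) (by simp) (hη.evalApply_sub_mem g x n)
  have hfg : aeval η (trunc n f * trunc n g) x - aeval η (trunc n (f * g)) x ∈ Φ n := by
    have hcoeff : ∀ k < n, (trunc n f * trunc n g).coeff k = (trunc n (f * g)).coeff k :=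
      fun k hk => by
        rw [← trunc_trunc_mul_trunc, coeff_trunc, if_pos hk, ← Polynomial.coe_mul,
          Polynomial.coeff_coe]
    simpa only [zero_add] using hη.aeval_sub_aeval_apply_mem hcoeff (Φ.mem_zero x)
  rw [map_mul, Module.End.mul_apply] at hfg
  simpa using Submodule.add_mem _ (Submodule.add_mem _ hf hg) hfg

lemma RaisesDegree.evalApply_coe (hη : Φ.RaisesDegree η) (p : R[X]) (x : M) :
    evalApply hη p x = aeval η p x :=
  (hη.eq_evalApply fun n => by
    simpa using hη.aeval_sub_aeval_apply_mem (fun k hk => by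
      rw [coeff_trunc, if_pos hk, Polynomial.coeff_coe]) (Φ.mem_zero x)).symm

noncomputable def eval (hη : Φ.RaisesDegree η) : R⟦X⟧ →ₐ[R] Module.End R M where
  toFun f := ⟨⟨evalApply hη f, hη.evalApply_add f⟩, hη.evalApply_smul f⟩
  map_one' := LinearMap.ext fun x => by simpa using hη.evalApply_coe 1 x
  map_mul' f g := LinearMap.ext (hη.evalApply_mul f g)
  map_zero' := LinearMap.ext fun x => by simpa using hη.evalApply_coe 0 x
  map_add' f g := LinearMap.ext (hη.evalApply_add_left f g)
  commutes' r := LinearMap.ext fun x => by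
    simpa [Module.algebraMap_end_apply] using hη.evalApply_coe (Polynomial.C r) x

lemma RaisesDegree.eval_apply (hη : Φ.RaisesDegree η) (f : R⟦X⟧) (x : M) :
    eval hη f x = evalApply hη f x := rfl

lemma eval_coe (hη : Φ.RaisesDegree η) (p : R[X]) : eval hη p = aeval η p :=
  LinearMap.ext (hη.evalApply_coe p)

lemma eval_X (hη : Φ.RaisesDegree η) : eval hη X = η := by
  simpa using eval_coe hη Polynomial.X

lemma RaisesDegree.eval_apply_sub_mem (hη : Φ.RaisesDegree η) (f : R⟦X⟧) {j : ℕ} {x : M}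
    (hx : x ∈ Φ j) (n : ℕ) : eval hη f x - aeval η (trunc n f) x ∈ Φ (j + n) := by
  have htail : aeval η (trunc (j + n) f) x - aeval η (trunc n f) x ∈ Φ (j + n) :=
    hη.aeval_sub_aeval_apply_mem (fun k hk => by simp [coeff_trunc, hk, show k < j + n by omega]) hx
  simpa [hη.eval_apply] using Submodule.add_mem _ (hη.evalApply_sub_mem f x (j + n)) htail

lemma RaisesDegree.eval_apply_mem_of_le_order (hη : Φ.RaisesDegree η) {f : R⟦X⟧} {n : ℕ}
    (hf : n ≤ f.order) {j : ℕ} {x : M} (hx : x ∈ Φ j) : eval hη f x ∈ Φ (j + n) := by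
  have htrunc : trunc n f = 0 := Polynomial.ext fun k => by
    simp +contextual [coeff_trunc, coeff_of_lt_order, (Nat.cast_lt.mpr _).trans_le hf]
  simpa [htrunc] using hη.eval_apply_sub_mem f hx n

lemma raisesDegree_eval (hη : Φ.RaisesDegree η) {g : R⟦X⟧} (hg : constantCoeff g = 0) :
    Φ.RaisesDegree (eval hη g) := fun _ _ hx =>
  hη.eval_apply_mem_of_le_order (by simpa [order_ne_zero_iff_constCoeff_eq_zero,
    Order.one_le_iff_ne_zero] using hg) hx

lemma eval_eval (hη : Φ.RaisesDegree η) {g : R⟦X⟧} (hg : constantCoeff g = 0) (f : R⟦X⟧) :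
    eval (raisesDegree_eval hη hg) f = eval hη (f.subst g) := by
  refine LinearMap.ext fun x => ((raisesDegree_eval hη hg).eq_evalApply fun n => ?_).symm
  have hsubst : HasSubst g := HasSubst.of_constantCoeff_zero' hg
  have horder : (n : ℕ∞) ≤ (f - trunc n f).order := le_order _ _ fun k hk => by
    simp [coeff_trunc, Polynomial.coeff_coe, Nat.cast_lt.mp hk]
  rw [Polynomial.aeval_algHom_apply, ← subst_coe hsubst, ← LinearMap.sub_apply, ← map_sub,
    ← subst_sub hsubst]
  simpa using hη.eval_apply_mem_of_le_order (horder.trans (le_order_subst_left' hg))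
    (Φ.mem_zero x)

lemma commute_eval (hη : Φ.RaisesDegree η) {T : Module.End R M} (hT : Commute T η)
    (f : R⟦X⟧) : Commute T (eval hη f) := by
  refine LinearMap.ext fun x => Φ.eq_of_forall_sub_mem fun n => ?_
  -- `T` need not preserve the filtration, so the tail of `f` is split off exactly.
  obtain ⟨s, hs⟩ : X ^ n ∣ f - (trunc n f : R⟦X⟧) := X_pow_dvd_iff.mpr fun k hk => by
    simp [coeff_trunc, Polynomial.coeff_coe, hk]
  have hf : eval hη f = η ^ n * eval hη s + aeval η (trunc n f) := by
    conv_lhs => rw [← sub_add_cancel f (trunc n f : R⟦X⟧), hs]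
    rw [map_add, map_mul, map_pow, eval_X, eval_coe]
  have hcommutator :
      T * eval hη f - eval hη f * T = η ^ n * (T * eval hη s - eval hη s * T) := by
    rw [hf, mul_add, add_mul, ← mul_assoc, (hT.pow_right n).eq, (hT.aeval_right _).eq]
    noncomm_ring
  have := hη.pow_apply_mem (Φ.mem_zero ((T * eval hη s - eval hη s * T) x)) n
  rwa [zero_add, ← Module.End.mul_apply, ← hcommutator] at this

lemma RaisesDegree.eval_apply_mem_of_isCompl (hη : Φ.RaisesDegree η) {U V : Submodule R M}
    (hUV : IsCompl U V) (hcomm : Commute (U.projection V hUV) η) (f : R⟦X⟧) {x : M}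
    (hx : x ∈ U) : eval hη f x ∈ U := by
  rw [← Submodule.projection_eq_self_iff hUV] at hx ⊢
  rw [← Module.End.mul_apply, (commute_eval hη hcomm f).eq, Module.End.mul_apply, hx]

end CompleteFiltration

namespace CompleteFiltration

variable {F M : Type*} [Field F] [CharZero F] [AddCommGroup M] [Module F M]
  {Φ : CompleteFiltration F M} {D : Module.End F M}

noncomputable def expSMul (hD : Φ.RaisesDegree D) (t : F) : Module.End F M :=
  eval hD (rescale t (exp F))

lemma expSMul_add (hD : Φ.RaisesDegree D) (t s : F) :
    expSMul hD (t + s) = expSMul hD t * expSMul hD s := by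
  rw [expSMul, expSMul, expSMul, ← map_mul, exp_mul_exp_eq_exp_add]

lemma expSMul_zero (hD : Φ.RaisesDegree D) : expSMul hD 0 = 1 := by
  simp [expSMul, rescale_zero, constantCoeff_exp]

lemma expSMul_natCast (hD : Φ.RaisesDegree D) (k : ℕ) : expSMul hD k = eval hD (exp F) ^ k := by
  rw [expSMul, ← exp_pow_eq_rescale_exp, map_pow]

lemma expSMul_one (hD : Φ.RaisesDegree D) : expSMul hD 1 = eval hD (exp F) := by
  simpa using expSMul_natCast hD 1

lemma RaisesDegree.expSMul_apply_sub_mem (hD : Φ.RaisesDegree D) (t : F) {j : ℕ} {x : M}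
    (hx : x ∈ Φ j) (n : ℕ) :
    expSMul hD t x - ∑ m ∈ range n, (t ^ m * (m.factorial : F)⁻¹) • (D ^ m) x ∈ Φ (j + n) := by
  simpa [expSMul, aeval_trunc_apply, coeff_rescale, coeff_exp] using
    hD.eval_apply_sub_mem (rescale t (exp F)) hx n

lemma eval_exp_eval_log {η : Module.End F M} (hη : Φ.RaisesDegree η) :
    eval (raisesDegree_eval hη constantCoeff_log) (exp F) = 1 + η := by
  rw [eval_eval hη constantCoeff_log, exp_subst_log, map_add, map_one, eval_X]

/-- The coefficient of `t ^ m` in `exp (t • D) (B x y) - B (exp (t • D) x) (exp (t • D) y)`. -/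
def leibnizDefect (B : M →ₗ[F] M →ₗ[F] M) (D : Module.End F M) (x y : M) (m : ℕ) : M :=
  (m.factorial : F)⁻¹ • (D ^ m) (B x y) - ∑ pq ∈ antidiagonal m,
    ((pq.1.factorial : F)⁻¹ * (pq.2.factorial : F)⁻¹) • B ((D ^ pq.1) x) ((D ^ pq.2) y)

variable {B : M →ₗ[F] M →ₗ[F] M} {d : ℕ}

lemma RaisesDegree.expSMul_map_sub_sum_leibnizDefect_mem (hD : Φ.RaisesDegree D)
    (hB : ∀ i j, ∀ x ∈ Φ i, ∀ y ∈ Φ j, B x y ∈ Φ (i + j - d)) (t : F) (x y : M) (K : ℕ) :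
    expSMul hD t (B x y) - B (expSMul hD t x) (expSMul hD t y)
      - ∑ m ∈ range K, t ^ m • leibnizDefect B D x y m ∈ Φ (K - d) := by
  set a : M → M := fun z => ∑ m ∈ range K, (t ^ m * (m.factorial : F)⁻¹) • (D ^ m) z
  set w : ℕ → ℕ → M := fun p q =>
    (t ^ p * (p.factorial : F)⁻¹ * (t ^ q * (q.factorial : F)⁻¹)) • B ((D ^ p) x) ((D ^ q) y)
  have happrox (z : M) : expSMul hD t z - a z ∈ Φ K := by
    simpa using hD.expSMul_apply_sub_mem t (Φ.mem_zero z) K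
  have hlhs : expSMul hD t (B x y) - a (B x y) ∈ Φ (K - d) :=
    Φ.mem_of_le (Nat.sub_le K d) (happrox _)
  have hrhs : B (expSMul hD t x) (expSMul hD t y) - B (a x) (a y) ∈ Φ (K - d) := by
    have h1 := hB K 0 _ (happrox x) _ (Φ.mem_zero (expSMul hD t y))
    have h2 := hB 0 K _ (Φ.mem_zero (a x)) _ (happrox y)
    rw [add_zero] at h1; rw [zero_add] at h2
    convert Submodule.add_mem _ h1 h2 using 1
    simp only [map_sub, LinearMap.sub_apply]
    abel
  have hprod : B (a x) (a y) = ∑ p ∈ range K, ∑ q ∈ range K, w p q := by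
    simp only [a, w, map_sum, LinearMap.sum_apply, map_smul, LinearMap.smul_apply, smul_sum,
      smul_smul]
    rw [Finset.sum_comm]
    exact sum_congr rfl fun p _ => sum_congr rfl fun q _ => by rw [mul_comm]
  have hcauchy := Finset.sum_range_sum_range_sub_sum_antidiagonal_mem (W := Φ (K - d)) K w
    fun p q hpq => Submodule.smul_mem _ _ (Φ.mem_of_le (by omega)
      (hB p q _ (by simpa using hD.pow_apply_mem (Φ.mem_zero x) p) _
        (by simpa using hD.pow_apply_mem (Φ.mem_zero y) q)))
  have hdefect : ∑ m ∈ range K, t ^ m • leibnizDefect B D x y m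
      = a (B x y) - ∑ m ∈ range K, ∑ pq ∈ antidiagonal m, w pq.1 pq.2 := by
    simp only [leibnizDefect, a, w, smul_sub, sum_sub_distrib, smul_sum, smul_smul]
    congr 1
    refine sum_congr rfl fun m _ => sum_congr rfl fun pq hpq => ?_
    rw [← mem_antidiagonal.mp hpq, pow_add]
    congr 1
    ring
  rw [← hprod] at hcauchy
  rw [hdefect]
  convert Submodule.sub_mem _ (Submodule.sub_mem _ hlhs hrhs) hcauchy using 1
  abel

lemma RaisesDegree.leibnizDefect_eq_zero (hD : Φ.RaisesDegree D)
    (hB : ∀ i j, ∀ x ∈ Φ i, ∀ y ∈ Φ j, B x y ∈ Φ (i + j - d))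
    (hnat : ∀ (k : ℕ) (x y : M), expSMul hD k (B x y) = B (expSMul hD k x) (expSMul hD k y))
    (x y : M) (m : ℕ) : leibnizDefect B D x y m = 0 := by
  refine Φ.eq_of_forall_sub_mem fun n => ?_
  have hmem := Submodule.mem_of_forall_sum_range_natCast_pow_smul_mem
    (W := Φ (n + d + m + 1 - d)) (v := leibnizDefect B D x y) (fun k _ => by
      simpa [hnat] using hD.expSMul_map_sub_sum_leibnizDefect_mem hB k x y (n + d + m + 1))
    m (by omega)
  simpa using Φ.mem_of_le (by omega) hmem

lemma RaisesDegree.expSMul_map_of_natCast (hD : Φ.RaisesDegree D)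
    (hB : ∀ i j, ∀ x ∈ Φ i, ∀ y ∈ Φ j, B x y ∈ Φ (i + j - d))
    (hnat : ∀ (k : ℕ) (x y : M), expSMul hD k (B x y) = B (expSMul hD k x) (expSMul hD k y))
    (t : F) (x y : M) : expSMul hD t (B x y) = B (expSMul hD t x) (expSMul hD t y) :=
  sub_eq_zero.mp <| Φ.eq_of_forall_sub_mem fun n => by
    simpa [hD.leibnizDefect_eq_zero hB hnat] using
      Φ.mem_of_le (by omega) (hD.expSMul_map_sub_sum_leibnizDefect_mem hB t x y (n + d))

lemma RaisesDegree.leibniz_of_expSMul_natCast (hD : Φ.RaisesDegree D)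
    (hB : ∀ i j, ∀ x ∈ Φ i, ∀ y ∈ Φ j, B x y ∈ Φ (i + j - d))
    (hnat : ∀ (k : ℕ) (x y : M), expSMul hD k (B x y) = B (expSMul hD k x) (expSMul hD k y))
    (x y : M) : D (B x y) = B (D x) y + B x (D y) := by
  have h1 := hD.leibnizDefect_eq_zero hB hnat x y 1
  simp [leibnizDefect, Nat.sum_antidiagonal_succ] at h1
  rw [← sub_eq_zero, ← h1]
  abel

end CompleteFiltration

open CompleteFiltration in
theorem stmt_10_general (F : Type*) [Field F] [CharZero F]
    (L : Type*) [AddCommGroup L] [Module F L] (sb : LieSuperalgebraOn F L)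
    (d : ℕ) (P : ℕ → Submodule F L)
    (hP0 : P 0 = ⊤) (hPanti : ∀ j, P (j + 1) ≤ P j)
    -- the filtration members are subalgebras: `[S_i, S_j] ⊆ S_{i+j}` (truncated at `-d`)
    (hPbr : ∀ i j : ℕ, ∀ x ∈ P i, ∀ y ∈ P j, sb.bracket x y ∈ P (i + j - d))
    -- Hausdorff-ness (the filtration topology is separated)
    (hsep : ⨅ j, P j = ⊥)
    -- completeness in the linearly compact (filtration) topology
    (hcompl : ∀ f : ℕ → L, (∀ m, f (m + 1) - f m ∈ P m) → ∃ x : L, ∀ m, x - f m ∈ P m)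
    -- `σ`: an automorphism of `L` preserving the filtration and inducing the identity on `Gr L`
    (σ : L ≃ₗ[F] L)
    (hσbr : ∀ x y : L, σ (sb.bracket x y) = sb.bracket (σ x) (σ y))
    (hσeven : Submodule.map (σ : L →ₗ[F] L) sb.even = sb.even)
    (hσodd : Submodule.map (σ : L →ₗ[F] L) sb.odd = sb.odd)
    (hσ1 : ∀ j, ∀ x ∈ P j, σ x - x ∈ P (j + 1)) :
    ∃ D : Module.End F L,
      -- `D = log σ` is the limit of the series `Σ_{m≥1} (-1)^{m+1} σ₁^m / m`
      (∀ j : ℕ, ∀ x ∈ P j, ∀ N : ℕ,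
        D x - ∑ m ∈ Finset.Icc 1 N,
          ((-1 : F) ^ (m + 1) * (m : F)⁻¹) •
            (((σ : Module.End F L) - 1) ^ m) x ∈ P (j + N + 1)) ∧
      -- `D` is a derivation of the Lie superalgebra `L` ...
      (∀ x y : L, D (sb.bracket x y) = sb.bracket (D x) y + sb.bracket x (D y)) ∧
      (∀ x ∈ sb.even, D x ∈ sb.even) ∧ (∀ x ∈ sb.odd, D x ∈ sb.odd) ∧
      -- ... lying in the first member `(Der L)₁` of the filtration of `Der L`
      (∀ j : ℕ, ∀ x ∈ P j, D x ∈ P (j + 1)) ∧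
      -- and `t ↦ exp (t • D)` is a one-parameter group of automorphisms with `E 1 = σ`
      (∃ E : F → (L ≃ₗ[F] L),
        (∀ t : F, ∀ x y : L, E t (sb.bracket x y) = sb.bracket (E t x) (E t y)) ∧
        (∀ t s : F, E (t + s) = (E t).trans (E s)) ∧
        E 0 = LinearEquiv.refl F L ∧ E 1 = σ ∧
        (∀ t : F, ∀ j : ℕ, ∀ x ∈ P j, ∀ N : ℕ,
          E t x - ∑ m ∈ Finset.range (N + 1),
            (t ^ m * ((Nat.factorial m : F)⁻¹)) • (D ^ m) x ∈ P (j + N + 1))) := by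
  let Φ : CompleteFiltration F L := ⟨P, hP0, antitone_nat_of_succ_le hPanti, hsep, hcompl⟩
  have hη : Φ.RaisesDegree ((σ : Module.End F L) - 1) := fun j x hx => by
    simpa using hσ1 j x hx
  have hD : Φ.RaisesDegree (eval hη (log F)) := raisesDegree_eval hη constantCoeff_log
  have hσexp : eval hD (exp F) = σ := by rw [eval_exp_eval_log, add_sub_cancel]
  have hnat (k : ℕ) (x y : L) : expSMul hD k (sb.bracket x y)
      = sb.bracket (expSMul hD k x) (expSMul hD k y) := by
    rw [expSMul_natCast, hσexp]
    exact Module.End.pow_apply_bilinear hσbr k x y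
  have hparity {U V : Submodule F L} (hUV : IsCompl U V) (hU : U.map (σ : L →ₗ[F] L) = U)
      (hV : V.map (σ : L →ₗ[F] L) = V) {x : L} (hx : x ∈ U) : eval hη (log F) x ∈ U :=
    hη.eval_apply_mem_of_isCompl hUV
      ((Submodule.commute_projection_of_map_eq hUV σ hU hV).sub_right (Commute.one_right _)) _ hx
  let E (t : F) : L ≃ₗ[F] L := LinearEquiv.ofLinearMap (expSMul hD t) (expSMul hD (-t))
    (by rw [← Module.End.mul_eq_comp, ← expSMul_add, add_neg_cancel, expSMul_zero]; rfl)
    (by rw [← Module.End.mul_eq_comp, ← expSMul_add, neg_add_cancel, expSMul_zero]; rfl)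
  refine ⟨eval hη (log F), fun j x hx N => ?_, hD.leibniz_of_expSMul_natCast hPbr hnat,
    fun x hx => hparity sb.compl hσeven hσodd hx, fun x hx => hparity sb.compl.symm hσodd hσeven hx,
    hD, E, hD.expSMul_map_of_natCast hPbr hnat, fun t s => ?_, ?_, ?_,
    fun t j x hx N => hD.expSMul_apply_sub_mem t hx (N + 1)⟩
  · have h := hη.eval_apply_sub_mem (log F) hx (N + 1)
    rwa [aeval_trunc_apply, sum_range_succ_coeff_log_smul] at h
  · ext x
    simp [E, add_comm t s, expSMul_add]
  · ext x
    simp [E, expSMul_zero]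
  · ext x
    simp [E, expSMul_one, hσexp]

/-- Let `L` be a linearly compact Lie superalgebra with a filtration
`L = S_{-d} ⊃ ⋯ ⊃ S₀ ⊃ S₁ ⊃ ⋯` by open subalgebras (here reindexed as `P j := S_{j-d}`, so
`P 0 = L`), with transitive associated graded algebra, Hausdorff (`⋂ P j = 0`) and complete in
the filtration topology.  If `σ` is a (continuous) automorphism of `L` preserving the
filtration and inducing the identity on `Gr L` (i.e. `σ₁ := σ - 1` maps `P j` into `P (j+1)`),
then `log σ = Σ_{m≥1} (-1)^{m+1} σ₁^m / m` converges in the linearly compact topology to an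
even derivation `D` with `D (P j) ⊆ P (j+1)` (i.e. `D` lies in the first member `(Der L)₁` of
the induced filtration of the derivation algebra), and `t ↦ exp (t • D)` converges to a
one-parameter group of automorphisms `E` with `E 1 = σ`; in particular `σ` lies in the image
of the exponential of `(Der L)₁`.  Convergence of a series is expressed by: each partial sum
up to `N` agrees with the limit modulo `P (j + N + 1)` on `P j`. -/
theorem stmt_10 (F : Type*) [Field F] [CharZero F]
    (L : Type*) [AddCommGroup L] [Module F L] (sb : LieSuperalgebraOn F L)
    (d : ℕ) (hd : 1 ≤ d) (P : ℕ → Submodule F L)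
    (hP0 : P 0 = ⊤) (hPanti : ∀ j, P (j + 1) ≤ P j)
    -- the filtration members are subalgebras: `[S_i, S_j] ⊆ S_{i+j}` (truncated at `-d`)
    (hPbr : ∀ i j : ℕ, ∀ x ∈ P i, ∀ y ∈ P j, sb.bracket x y ∈ P (i + j - d))
    -- Hausdorff-ness (the filtration topology is separated)
    (hsep : ⨅ j, P j = ⊥)
    -- completeness in the linearly compact (filtration) topology
    (hcompl : ∀ f : ℕ → L, (∀ m, f (m + 1) - f m ∈ P m) → ∃ x : L, ∀ m, x - f m ∈ P m)
    -- transitivity of the associated graded algebra `Gr L`: for `x ∈ 𝔤_n`, `n ≥ 0`,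
    -- `[x, 𝔤_{-1}] = 0` implies `x = 0`
    (htrans : ∀ m : ℕ, ∀ x ∈ P (m + d),
      (∀ y ∈ P (d - 1), sb.bracket x y ∈ P (m + d)) → x ∈ P (m + d + 1))
    -- `σ`: an automorphism of `L` preserving the filtration and inducing the identity on `Gr L`
    (σ : L ≃ₗ[F] L)
    (hσbr : ∀ x y : L, σ (sb.bracket x y) = sb.bracket (σ x) (σ y))
    (hσeven : Submodule.map (σ : L →ₗ[F] L) sb.even = sb.even)
    (hσodd : Submodule.map (σ : L →ₗ[F] L) sb.odd = sb.odd)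
    (hσfil : ∀ j, Submodule.map (σ : L →ₗ[F] L) (P j) = P j)
    (hσ1 : ∀ j, ∀ x ∈ P j, σ x - x ∈ P (j + 1)) :
    ∃ D : Module.End F L,
      -- `D = log σ` is the limit of the series `Σ_{m≥1} (-1)^{m+1} σ₁^m / m`
      (∀ j : ℕ, ∀ x ∈ P j, ∀ N : ℕ,
        D x - ∑ m ∈ Finset.Icc 1 N,
          ((-1 : F) ^ (m + 1) * (m : F)⁻¹) •
            (((σ : Module.End F L) - 1) ^ m) x ∈ P (j + N + 1)) ∧
      -- `D` is a derivation of the Lie superalgebra `L` ...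
      (∀ x y : L, D (sb.bracket x y) = sb.bracket (D x) y + sb.bracket x (D y)) ∧
      (∀ x ∈ sb.even, D x ∈ sb.even) ∧ (∀ x ∈ sb.odd, D x ∈ sb.odd) ∧
      -- ... lying in the first member `(Der L)₁` of the filtration of `Der L`
      (∀ j : ℕ, ∀ x ∈ P j, D x ∈ P (j + 1)) ∧
      -- and `t ↦ exp (t • D)` is a one-parameter group of automorphisms with `E 1 = σ`
      (∃ E : F → (L ≃ₗ[F] L),
        (∀ t : F, ∀ x y : L, E t (sb.bracket x y) = sb.bracket (E t x) (E t y)) ∧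
        (∀ t s : F, E (t + s) = (E t).trans (E s)) ∧
        E 0 = LinearEquiv.refl F L ∧ E 1 = σ ∧
        (∀ t : F, ∀ j : ℕ, ∀ x ∈ P j, ∀ N : ℕ,
          E t x - ∑ m ∈ Finset.range (N + 1),
            (t ^ m * ((Nat.factorial m : F)⁻¹)) • (D ^ m) x ∈ P (j + N + 1))) :=
  stmt_10_general F L sb d P hP0 hPanti hPbr hsep hcompl σ hσbr hσeven hσodd hσ1
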